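/- If L ⊆ Σ^ω is recognized by some deterministic co-Büchi automaton, then the equivalence relation ≡_L on pairs of finite words has only finitely many equivalence classes. -/

import Mathlib

open Classical

/-- Rank of a transition in a co-Büchi automaton: `one` or `two`. -/
inductive Rk | one | two
deriving DecidableEq

/-- A co-Büchi automaton over alphabet `A` with state type `Q`:
initial states and a transition relation where each transition carries a rank. -/
structure CoBuchi (A : Type) (Q : Type) where
  init : Set Q
  delta : Set (Q × A × Rk × Q)

namespace CoBuchi

variable {A Q : Type}

/-- Every state has an outgoing transition on every letter. -/
def Total (M : CoBuchi A Q) : Prop :=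
  ∀ q a, ∃ r q', (q, a, r, q') ∈ M.delta

/-- The prefix `α[0..n-1]` of an infinite word. -/
def prefW (α : ℕ → A) (n : ℕ) : List A := (List.range n).map α

/-- The infinite word `a·w`. -/
def consW (a : A) (w : ℕ → A) : ℕ → A := fun n => match n with
  | 0 => a
  | Nat.succ k => w k

/-- `L(M,q)`: infinite words having a run from `q` with only finitely many rank-1
transitions. -/
def LangFrom (M : CoBuchi A Q) (q : Q) : Set (ℕ → A) :=
  { w | ∃ (ρ : ℕ → Q) (r : ℕ → Rk), ρ 0 = q ∧
        (∀ n, (ρ n, w n, r n, ρ (n + 1)) ∈ M.delta) ∧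
        ∃ N, ∀ n, N ≤ n → r n = Rk.two }

/-- `L(M)`: the language of the automaton. -/
def Lang (M : CoBuchi A Q) : Set (ℕ → A) :=
  { w | ∃ q ∈ M.init, w ∈ M.LangFrom q }

/-- `q →₂^w q'`: a finite run from `q` to `q'` on `w` using only rank-2 transitions. -/
def SafeReach (M : CoBuchi A Q) : Q → List A → Q → Prop
  | q, [], q' => q = q'
  | q, a :: w, q' => ∃ p, (q, a, Rk.two, p) ∈ M.delta ∧ SafeReach M p w q'

/-- A finite run from `q` to `q'` on `w` using transitions of any rank. -/
def Reach (M : CoBuchi A Q) : Q → List A → Q → Prop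
  | q, [], q' => q = q'
  | q, a :: w, q' => ∃ r p, (q, a, r, p) ∈ M.delta ∧ Reach M p w q'

/-- Safe language of a state. -/
def Lsf (M : CoBuchi A Q) (q : Q) : Set (List A) := { w | ∃ q', M.SafeReach q w q' }

/-- Semantically-deterministic: every transition respects residuals. -/
def SemDet (M : CoBuchi A Q) : Prop :=
  ∀ p a rk q, (p, a, rk, q) ∈ M.delta →
    M.LangFrom q = { w | consW a w ∈ M.LangFrom p }

/-- Unsafe-saturated: all residual-respecting rank-1 transitions are present. -/
def UnsafeSat (M : CoBuchi A Q) : Prop :=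
  ∀ p a q, M.LangFrom q = { w | consW a w ∈ M.LangFrom p } →
    (p, a, Rk.one, q) ∈ M.delta

/-- Safe-deterministic: at most one rank-2 transition per state and letter. -/
def SafeDet (M : CoBuchi A Q) : Prop :=
  ∀ p a q q', (p, a, Rk.two, q) ∈ M.delta → (p, a, Rk.two, q') ∈ M.delta → q = q'

/-- Normalized: every rank-2 transition can be completed to a rank-2 loop. -/
def Normalized (M : CoBuchi A Q) : Prop :=
  ∀ q a q', (q, a, Rk.two, q') ∈ M.delta → ∃ x, M.SafeReach q' x q

/-- Deterministic: one initial state, exactly one transition per state and letter. -/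
def Deterministic (M : CoBuchi A Q) : Prop :=
  (∃! q, q ∈ M.init) ∧ ∀ p a, ∃! t : Rk × Q, (p, a, t.1, t.2) ∈ M.delta

/-- History-deterministic: a strategy `σ : Σ* → Q` resolving the nondeterminism,
whose run on every `α ∈ L(M)` can be ranked with finitely many rank-1 transitions. -/
def HistoryDet (M : CoBuchi A Q) : Prop :=
  ∃ σ : List A → Q, σ [] ∈ M.init ∧
    (∀ w a, ∃ rk, (σ w, a, rk, σ (w ++ [a])) ∈ M.delta) ∧
    ∀ α ∈ M.Lang, ∃ r : ℕ → Rk,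
      (∀ n, (σ (prefW α n), α n, r n, σ (prefW α (n + 1))) ∈ M.delta) ∧
      ∃ N, ∀ n, N ≤ n → r n = Rk.two

/-- `q` and `q'` are in the same safe SCC (mutually reachable via rank-2 runs). -/
def SameSafeSCC (M : CoBuchi A Q) (q q' : Q) : Prop :=
  (∃ x, M.SafeReach q x q') ∧ (∃ y, M.SafeReach q' y q)

end CoBuchi

section LangDefs

variable {A : Type} [Nonempty A]

/-- The infinite word `u·w`. -/
def appW (u : List A) (w : ℕ → A) : ℕ → A :=
  fun n => if h : n < u.length then u.get ⟨n, h⟩ else w (n - u.length)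

/-- The infinite word `v^ω` (arbitrary if `v = ε`). -/
noncomputable def iterW (v : List A) : ℕ → A :=
  fun n =>
    if h : v = [] then Classical.arbitrary A
    else v.get ⟨n % v.length, Nat.mod_lt _ (List.length_pos_of_ne_nil h)⟩

/-- The ultimately periodic word `u v^ω`. -/
noncomputable def upW (u v : List A) : ℕ → A := appW u (iterW v)

/-- The right congruence `u ∼_L v`. -/
def SimL (L : Set (ℕ → A)) (u v : List A) : Prop :=
  ∀ w : ℕ → A, appW u w ∈ L ↔ appW v w ∈ L

/-- `(u,v) ≈_L ⊥`: `v ≠ ε` and `u(vx)^ω ∉ L` for all `x` with `uvx ∼_L u`. -/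
def ApproxBot (L : Set (ℕ → A)) (u v : List A) : Prop :=
  v ≠ [] ∧ ∀ x : List A, SimL L (u ++ v ++ x) u → upW u (v ++ x) ∉ L

/-- The safe language of a pair: `sfl(u,v) = {x | (u,vx) not ≈_L ⊥}`. -/
def Sfl (L : Set (ℕ → A)) (u v : List A) : Set (List A) :=
  { x | ¬ ApproxBot L u (v ++ x) }

/-- `(u,v) ≡_L (u',v')`. -/
def EquivL (L : Set (ℕ → A)) (u v u' v' : List A) : Prop :=
  SimL L (u ++ v) (u' ++ v') ∧ Sfl L u v = Sfl L u' v'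

/-- `(u,v)` is pointed. -/
def IsPointed (L : Set (ℕ → A)) (u v : List A) : Prop :=
  ¬ ApproxBot L u v ∧
    ∀ u₁ u₂ : List A, SimL L (u₁ ++ u₂) u → ¬ ApproxBot L u₁ (u₂ ++ v) →
      Sfl L u v = Sfl L u₁ (u₂ ++ v)

/-- `(u,v) ≈_L (u',v')` (for pairs with nonempty second components). -/
def ApproxL (L : Set (ℕ → A)) (u v u' v' : List A) : Prop :=
  SimL L u u' ∧ SimL L (u ++ v) (u' ++ v') ∧
    ∀ x : List A, SimL L (u ++ v ++ x) u →
      (upW u (v ++ x) ∈ L ↔ upW u' (v' ++ x) ∈ L)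

/-- `L` is recognized by some (total) deterministic co-Büchi automaton. -/
def DCWRecognizable (L : Set (ℕ → A)) : Prop :=
  ∃ (Q : Type) (_ : Fintype Q) (M : CoBuchi A Q), M.Deterministic ∧ M.Lang = L

/-- IsPointed pairs. -/
def PointedPair (L : Set (ℕ → A)) : Type :=
  { p : List A × List A // IsPointed L p.1 p.2 }

/-- `≡_L` as a setoid on all pairs. -/
def equivLSetoid (L : Set (ℕ → A)) : Setoid (List A × List A) where
  r p q := EquivL L p.1 p.2 q.1 q.2
  iseqv := {
    refl := fun p => ⟨fun w => Iff.rfl, rfl⟩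
    symm := fun h => ⟨fun w => (h.1 w).symm, h.2.symm⟩
    trans := fun h g => ⟨fun w => (h.1 w).trans (g.1 w), h.2.trans g.2⟩ }

/-- `≡_L` as a setoid on pointed pairs. -/
def canonSetoid (L : Set (ℕ → A)) : Setoid (PointedPair L) where
  r p q := EquivL L p.1.1 p.1.2 q.1.1 q.1.2
  iseqv := {
    refl := fun p => ⟨fun w => Iff.rfl, rfl⟩
    symm := fun h => ⟨fun w => (h.1 w).symm, h.2.symm⟩
    trans := fun h g => ⟨fun w => (h.1 w).trans (g.1 w), h.2.trans g.2⟩ }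

/-- States of the canonical automaton: `≡_L`-classes of pointed pairs. -/
def CanonState (L : Set (ℕ → A)) : Type := Quotient (canonSetoid L)

/-- The class `⟦u,v⟧` of a pointed pair. -/
def cls (L : Set (ℕ → A)) (u v : List A) (h : IsPointed L u v) : CanonState L :=
  Quotient.mk (canonSetoid L) ⟨(u, v), h⟩

/-- The canonical automaton `A_{≡_L}`. -/
def canonAut (L : Set (ℕ → A)) : CoBuchi A (CanonState L) where
  init := { s | ∃ (u v : List A) (h : IsPointed L u v),
              s = cls L u v h ∧ SimL L (u ++ v) [] }
  delta := { t |
    (∃ (u v : List A) (h : IsPointed L u v) (h' : IsPointed L u (v ++ [t.2.1])),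
        ¬ ApproxBot L u (v ++ [t.2.1]) ∧
        t.1 = cls L u v h ∧ t.2.2.1 = Rk.two ∧
        t.2.2.2 = cls L u (v ++ [t.2.1]) h') ∨
    (∃ (u v u' v' : List A) (h : IsPointed L u v) (h' : IsPointed L u' v'),
        SimL L (u ++ v ++ [t.2.1]) (u' ++ v') ∧
        t.1 = cls L u v h ∧ t.2.2.1 = Rk.one ∧ t.2.2.2 = cls L u' v' h') }

/-- `θ(u,v)`: states of `A_{≡_L}` reachable by reading `u` from an initial state
(any ranks) and then `v` via rank-2 transitions only. -/
def theta (L : Set (ℕ → A)) (u v : List A) : Set (CanonState L) :=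
  { q | ∃ p₀ ∈ (canonAut L).init, ∃ p,
          (canonAut L).Reach p₀ u p ∧ (canonAut L).SafeReach p v q }

/-- `(u,v)` is supported: `θ(u,v) ≠ ∅`. -/
def Supported (L : Set (ℕ → A)) (u v : List A) : Prop := (theta L u v).Nonempty

/-- `(u,v)` is double-supported: two distinct states of `θ(u,v)` in the same safe SCC. -/
def DoubleSupported (L : Set (ℕ → A)) (u v : List A) : Prop :=
  ∃ q ∈ theta L u v, ∃ q' ∈ theta L u v, q ≠ q' ∧ (canonAut L).SameSafeSCC q q'

/-- `(u,v)` is single-supported. -/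
def SingleSupported (L : Set (ℕ → A)) (u v : List A) : Prop :=
  Supported L u v ∧ ¬ DoubleSupported L u v

/-- `w` concatenated with itself `m` times. -/
def repCat (w : List A) : ℕ → List A
  | 0 => []
  | Nat.succ m => w ++ repCat w m

end LangDefs

/-!
Fix a deterministic co-Büchi automaton for `L`, with transition function `δ` and initial state
`q₀`, and write `δ_x = run δ x` for the state transformer of a finite word `x`. On `u v^ω` the
run visits `δ_v^i (δ_u q₀)` at the block boundaries, and it accepts iff from some block on every
block `v` is read with rank-2 transitions only. Hence the `∼_L`-class of `u` and whether
`u v^ω ∈ L` depend only on `δ_u q₀`, `δ_v` and the set of states from which `v` is read safely.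
These data, together with whether `v = ε`, are compatible with appending a word to `v`, so they
determine both the `∼_L`-class of `uv` and `sfl(u, v)`, i.e. the `≡_L`-class of `(u, v)`; and
they range over a finite set.
-/

open Filter CoBuchi

theorem Nat.eventually_atTop_iff_eventually_forall_block {p : ℕ → Prop} {m : ℕ} (hm : 0 < m) :
    (∀ᶠ n in atTop, p n) ↔ ∀ᶠ i in atTop, ∀ k < m, p (i * m + k) := by
  simp only [eventually_atTop]
  constructor
  · rintro ⟨N, hN⟩
    exact ⟨N, fun i hi k _ => hN _ <| hi.trans <|
      (Nat.le_mul_of_pos_right i hm).trans (Nat.le_add_right _ _)⟩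
  · rintro ⟨I, hI⟩
    refine ⟨I * m, fun n hn => ?_⟩
    rw [← Nat.div_add_mod' n m]
    exact hI _ ((Nat.le_div_iff_mul_le hm).2 hn) _ (Nat.mod_lt _ hm)

theorem Setoid.finite_quotient_of_ker_le {α β : Type*} [Finite β] (s : Setoid α) (f : α → β)
    (h : ∀ a b, f a = f b → s a b) : Finite (Quotient s) :=
  have : Finite (Quotient (Setoid.ker f)) :=
    Finite.of_injective _ (Setoid.kerLift_injective f)
  Finite.of_surjective (Setoid.map_of_le (s := Setoid.ker f) fun {a b} hab => h a b hab)
    (Quotient.ind fun a => ⟨⟦a⟧, rfl⟩)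

section Words

variable {A : Type}

theorem appW_length_add (u : List A) (w : ℕ → A) (k : ℕ) : appW u w (u.length + k) = w k := by
  simp [appW]

theorem appW_of_lt {u : List A} (w : ℕ → A) {k : ℕ} (hk : k < u.length) :
    appW u w k = u[k] := by
  simp [appW, hk]

theorem appW_append (u v : List A) (w : ℕ → A) : appW (u ++ v) w = appW u (appW v w) := by
  funext n
  simp only [appW, List.length_append, List.get_eq_getElem]
  split_ifs with huv hu hv hv
  · exact List.getElem_append_left hu
  · exact List.getElem_append_right (by omega)
  · omega
  · omega
  · omega
  · rw [Nat.sub_sub]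

theorem prefW_succ (w : ℕ → A) (n : ℕ) : prefW w (n + 1) = prefW w n ++ [w n] := by
  simp [prefW, List.range_succ]

theorem prefW_appW_length_add (u : List A) (w : ℕ → A) (k : ℕ) :
    prefW (appW u w) (u.length + k) = u ++ prefW w k := by
  induction k with
  | zero =>
    simp only [add_zero, prefW, List.range_zero, List.map_nil, List.append_nil]
    refine List.ext_getElem (by simp) fun n _ hn => ?_
    simp [appW_of_lt w hn]
  | succ k ih => rw [← add_assoc, prefW_succ, ih, prefW_succ, appW_length_add, List.append_assoc]

theorem appW_iterW [Nonempty A] {y : List A} (hy : y ≠ []) : appW y (iterW y) = iterW y := by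
  funext n
  have hlen : 0 < y.length := List.length_pos_iff.mpr hy
  simp only [appW, iterW, dif_neg hy]
  split_ifs with h
  · congr 1
    exact Fin.ext (Nat.mod_eq_of_lt h).symm
  · congr 1
    exact Fin.ext (Nat.mod_eq_sub_mod (by omega)).symm

end Words

namespace DetCoBuchi

variable {A Q : Type} (δ : Q → A → Rk × Q)

def run (u : List A) (q : Q) : Q := u.foldl (fun q a => (δ q a).2) q

def Safe : List A → Q → Prop
  | [], _ => True
  | a :: u, q => (δ q a).1 = .two ∧ Safe u (δ q a).2

def rank (w : ℕ → A) (q : Q) (n : ℕ) : Rk := (δ (run δ (prefW w n) q) (w n)).1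

def Accepts (q : Q) (w : ℕ → A) : Prop := ∀ᶠ n in atTop, rank δ w q n = .two

theorem run_append (u v : List A) (q : Q) : run δ (u ++ v) q = run δ v (run δ u q) :=
  List.foldl_append

theorem safe_append (u v : List A) (q : Q) :
    Safe δ (u ++ v) q ↔ Safe δ u q ∧ Safe δ v (run δ u q) := by
  induction u generalizing q with
  | nil => simp [Safe, run]
  | cons a u ih => simp only [List.cons_append, Safe, ih, and_assoc]; rfl

theorem run_append_congr {y y' : List A} (h : run δ y = run δ y') (x : List A) :
    run δ (y ++ x) = run δ (y' ++ x) :=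
  funext fun q => by rw [run_append, run_append, h]

theorem safe_append_congr {y y' : List A} (hrun : run δ y = run δ y')
    (hsafe : Safe δ y = Safe δ y') (x : List A) : Safe δ (y ++ x) = Safe δ (y' ++ x) :=
  funext fun q => propext <| by rw [safe_append, safe_append, hrun, hsafe]

theorem rank_appW_length_add (u : List A) (w : ℕ → A) (q : Q) (k : ℕ) :
    rank δ (appW u w) q (u.length + k) = rank δ w (run δ u q) k := by
  simp only [rank, prefW_appW_length_add, appW_length_add, run_append]

theorem accepts_appW (u : List A) (w : ℕ → A) (q : Q) :
    Accepts δ q (appW u w) ↔ Accepts δ (run δ u q) w := by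
  simp only [Accepts, ← rank_appW_length_add, add_comm u.length]
  conv_lhs => rw [← map_add_atTop_eq_nat u.length]
  exact eventually_map

theorem safe_iff_forall_rank (y : List A) (w : ℕ → A) (q : Q) :
    Safe δ y q ↔ ∀ k < y.length, rank δ (appW y w) q k = .two := by
  induction y generalizing q with
  | nil => simp [Safe]
  | cons a y ih =>
    have hhead : rank δ (appW (a :: y) w) q 0 = (δ q a).1 := by simp [rank, prefW, run, appW]
    have htail (k : ℕ) :
        rank δ (appW (a :: y) w) q (k + 1) = rank δ (appW y w) (δ q a).2 k := by
      rw [add_comm, ← List.singleton_append, appW_append]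
      exact rank_appW_length_add δ [a] _ q k
    rw [List.length_cons, Nat.forall_lt_succ_left, Safe, ih, hhead]
    simp only [htail]

theorem langFrom_eq {M : CoBuchi A Q} (hδ : M.delta = {t | δ t.1 t.2.1 = t.2.2}) (q : Q) :
    M.LangFrom q = {w | Accepts δ q w} := by
  ext w
  constructor
  · rintro ⟨ρ, r, h0, hstep, N, hN⟩
    have hstep' (n : ℕ) : δ (ρ n) (w n) = (r n, ρ (n + 1)) := by
      rw [hδ] at hstep
      exact hstep n
    have hρ (n : ℕ) : ρ n = run δ (prefW w n) q := by
      induction n with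
      | zero => exact h0
      | succ n ih =>
        rw [prefW_succ, run_append, ← ih]
        exact (congrArg Prod.snd (hstep' n)).symm
    refine eventually_atTop.2 ⟨N, fun n hn => ?_⟩
    rw [← hN n hn, rank, ← hρ, hstep']
  · intro h
    obtain ⟨N, hN⟩ := eventually_atTop.1 h
    refine ⟨fun n => run δ (prefW w n) q, rank δ w q, rfl, fun n => ?_, N, hN⟩
    rw [hδ]
    show δ (run δ (prefW w n) q) (w n) = (rank δ w q n, run δ (prefW w (n + 1)) q)
    rw [prefW_succ, run_append]
    rfl

theorem simL_iff {L : Set (ℕ → A)} {q₀ : Q} (hL : L = {w | Accepts δ q₀ w}) (u v : List A) :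
    SimL L u v ↔ ∀ w, Accepts δ (run δ u q₀) w ↔ Accepts δ (run δ v q₀) w := by
  subst hL
  simp only [SimL, Set.mem_ofPred_eq, accepts_appW]

section UltimatelyPeriodic

variable [Nonempty A] {L : Set (ℕ → A)} {q₀ : Q}

theorem rank_iterW_mul_add {y : List A} (hy : y ≠ []) (i k : ℕ) (q : Q) :
    rank δ (iterW y) q (i * y.length + k) = rank δ (iterW y) ((run δ y)^[i] q) k := by
  induction i generalizing q with
  | zero => simp
  | succ i ih =>
    conv_lhs => rw [← appW_iterW hy, add_mul, one_mul, add_right_comm, add_comm,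
      rank_appW_length_add, ih]
    rfl

theorem accepts_iterW_iff {y : List A} (hy : y ≠ []) (q : Q) :
    Accepts δ q (iterW y) ↔ ∀ᶠ i in atTop, Safe δ y ((run δ y)^[i] q) := by
  rw [Accepts, Nat.eventually_atTop_iff_eventually_forall_block (List.length_pos_iff.2 hy)]
  simp only [rank_iterW_mul_add δ hy, safe_iff_forall_rank δ y (iterW y), appW_iterW hy]

theorem upW_mem_iff (hL : L = {w | Accepts δ q₀ w}) (u : List A) {y : List A} (hy : y ≠ []) :
    upW u y ∈ L ↔ ∀ᶠ i in atTop, Safe δ y ((run δ y)^[i] (run δ u q₀)) := by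
  subst hL
  rw [Set.mem_ofPred_eq, upW, accepts_appW, accepts_iterW_iff δ hy]

theorem approxBot_congr (hL : L = {w | Accepts δ q₀ w}) {u u' y y' : List A}
    (hu : run δ u q₀ = run δ u' q₀) (hrun : run δ y = run δ y') (hsafe : Safe δ y = Safe δ y')
    (hnil : y = [] ↔ y' = []) : ApproxBot L u y ↔ ApproxBot L u' y' := by
  unfold ApproxBot
  rw [← show y ≠ [] ↔ y' ≠ [] from not_congr hnil]
  refine and_congr_right fun hy => forall_congr' fun x => imp_congr ?_ (not_congr ?_)
  · simp only [simL_iff δ hL, run_append, hu, hrun]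
  · have hyx : y ++ x ≠ [] := by simp [hy]
    have hyx' : y' ++ x ≠ [] := by simp [← hnil, hy]
    rw [upW_mem_iff δ hL u hyx, upW_mem_iff δ hL u' hyx', run_append_congr δ hrun,
      safe_append_congr δ hrun hsafe, hu]

theorem equivL_of_run_eq (hL : L = {w | Accepts δ q₀ w}) {u v u' v' : List A}
    (hu : run δ u q₀ = run δ u' q₀) (hrun : run δ v = run δ v') (hsafe : Safe δ v = Safe δ v')
    (hnil : v = [] ↔ v' = []) : EquivL L u v u' v' :=
  ⟨(simL_iff δ hL _ _).2 fun w => by rw [run_append, run_append, hu, hrun],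
    Set.ext fun x => not_congr <| approxBot_congr δ hL hu (run_append_congr δ hrun x)
      (safe_append_congr δ hrun hsafe x) (by simp [hnil])⟩

theorem finite_quotient_equivLSetoid [Finite Q] (hL : L = {w | Accepts δ q₀ w}) :
    Finite (Quotient (equivLSetoid L)) :=
  Setoid.finite_quotient_of_ker_le _
    (fun p : List A × List A => (run δ p.1 q₀, run δ p.2, Safe δ p.2, p.2 = []))
    fun _ _ h => by
      simp only [Prod.mk.injEq] at h
      obtain ⟨hu, hrun, hsafe, hnil⟩ := h
      exact equivL_of_run_eq δ hL hu hrun hsafe hnil.to_iff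

end UltimatelyPeriodic

end DetCoBuchi

theorem CoBuchi.Deterministic.exists_lang_eq {A Q : Type} {M : CoBuchi A Q}
    (hM : M.Deterministic) :
    ∃ (δ : Q → A → Rk × Q) (q₀ : Q), M.Lang = {w | DetCoBuchi.Accepts δ q₀ w} := by
  choose δ hδ using fun q a => (hM.2 q a).exists
  have hgraph : M.delta = {t | δ t.1 t.2.1 = t.2.2} := by
    ext ⟨q, a, r, q'⟩
    exact ⟨fun h => (hM.2 q a).unique (hδ q a) h,
      fun (h : δ q a = (r, q')) => by simpa [h] using hδ q a⟩
  obtain ⟨q₀, hq₀, huniq⟩ := hM.1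
  refine ⟨δ, q₀, Set.ext fun w => ⟨?_, fun h => ⟨q₀, hq₀, ?_⟩⟩⟩
  · rintro ⟨q, hq, hw⟩
    rwa [huniq q hq, DetCoBuchi.langFrom_eq δ hgraph] at hw
  · rwa [DetCoBuchi.langFrom_eq δ hgraph]

theorem stmt4_general {A : Type} [Nonempty A] (L : Set (ℕ → A))
    (hrec : DCWRecognizable L) :
    Finite (Quotient (equivLSetoid L)) := by
  obtain ⟨Q, _, M, hM, rfl⟩ := hrec
  obtain ⟨δ, q₀, hL⟩ := hM.exists_lang_eq
  exact DetCoBuchi.finite_quotient_equivLSetoid δ hL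

/-- if `L` is recognized by a deterministic co-Büchi automaton
then `≡_L` has finitely many equivalence classes. -/
theorem stmt4 {A : Type} [Nonempty A] [Fintype A] (L : Set (ℕ → A))
    (hrec : DCWRecognizable L) :
    Finite (Quotient (equivLSetoid L)) :=
  stmt4_general L hrec
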